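/- Let L be a tense logic extending S4.3_t. Then L ⊆ L^↑ if and only if dep(L) = ℵ0, where L^↑ = ⋂_{n≥1} Log(𝔠_n) is the tense logic of all finite chains. -/

import Mathlib

/-! ## Syntax of tense logic -/

inductive TForm : Type
  | var : ℕ → TForm
  | bot : TForm
  | imp : TForm → TForm → TForm
  | box : TForm → TForm
  | bdia : TForm → TForm
  deriving DecidableEq

namespace TForm

def neg (φ : TForm) : TForm := imp φ bot

def top : TForm := neg bot

def orf (φ ψ : TForm) : TForm := imp (neg φ) ψ

def andf (φ ψ : TForm) : TForm := neg (imp φ (neg ψ))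

def dia (φ : TForm) : TForm := neg (box (neg φ))

def bbox (φ : TForm) : TForm := neg (bdia (neg φ))

def subst (s : ℕ → TForm) : TForm → TForm
  | var n => s n
  | bot => bot
  | imp φ ψ => imp (subst s φ) (subst s ψ)
  | box φ => box (subst s φ)
  | bdia φ => bdia (subst s φ)

/-- Modal degree of a formula. -/
def mdeg : TForm → ℕ
  | var _ => 0
  | bot => 0
  | imp φ ψ => max (mdeg φ) (mdeg ψ)
  | box φ => mdeg φ + 1
  | bdia φ => mdeg φ + 1

end TForm

open TForm

/-! ## Frames and relational notions -/

/-- `R[U] = {z : ∃ y ∈ U, R y z}`. -/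
def Rimg {X : Type*} (R : X → X → Prop) (U : Set X) : Set X := {z | ∃ y ∈ U, R y z}

/-- `R[x]`, the set of `R`-successors of `x`. -/
def rsucc {X : Type*} (R : X → X → Prop) (x : X) : Set X := {y | R x y}

/-- `R̆[x]`, the set of `R`-predecessors of `x`. -/
def rpred {X : Type*} (R : X → X → Prop) (x : X) : Set X := {y | R y x}

/-- `R_♯^k[x]`. -/
def rsharp {X : Type*} (R : X → X → Prop) : ℕ → X → Set X
  | 0, x => {x}
  | k+1, x => rsharp R k x ∪ Rimg R (rsharp R k x) ∪ Rimg (flip R) (rsharp R k x)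

/-- `R_♯^ω[x]`. -/
def rsharpOmega {X : Type*} (R : X → X → Prop) (x : X) : Set X := ⋃ k : ℕ, rsharp R k x

/-- A frame is rooted if it is generated by a single point under `R` and its converse. -/
def Rooted {X : Type*} (R : X → X → Prop) : Prop := ∃ x : X, ∀ y : X, y ∈ rsharpOmega R x

/-- A frame is image-finite if `R_♯^1[x]` is finite for every `x`. -/
def ImageFinite {X : Type*} (R : X → X → Prop) : Prop := ∀ x : X, (rsharp R 1 x).Finite

/-! ## Semantics -/

def TSat {X : Type*} (R : X → X → Prop) (V : ℕ → Set X) : TForm → Set X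
  | .var n => V n
  | .bot => ∅
  | .imp φ ψ => (TSat R V φ)ᶜ ∪ TSat R V ψ
  | .box φ => {x | ∀ y, R x y → y ∈ TSat R V φ}
  | .bdia φ => {x | ∃ y, R y x ∧ y ∈ TSat R V φ}

/-- `φ` is valid at the point `x` of the frame `(X,R)`. -/
def ValidAt {X : Type*} (R : X → X → Prop) (x : X) (φ : TForm) : Prop :=
  ∀ V : ℕ → Set X, x ∈ TSat R V φ

/-- `φ` is valid in the frame `(X,R)`. -/
def Valid {X : Type*} (R : X → X → Prop) (φ : TForm) : Prop :=
  ∀ (V : ℕ → Set X) (x : X), x ∈ TSat R V φ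

/-- The tense logic of a frame. -/
def FrameLog {X : Type*} (R : X → X → Prop) : Set TForm := {φ | Valid R φ}

/-! ## Tense logics -/

/-- `φ` is a substitution instance of a classical propositional tautology. -/
def IsTautInstance (φ : TForm) : Prop :=
  ∀ v : TForm → Prop, ¬ v .bot → (∀ ψ χ, v (.imp ψ χ) ↔ (v ψ → v χ)) → v φ

/-- A (normal) tense logic. -/
structure TenseLogic (L : Set TForm) : Prop where
  taut_mem : ∀ φ, IsTautInstance φ → φ ∈ L
  adjoint : ∀ φ ψ : TForm, TForm.imp (.bdia φ) ψ ∈ L ↔ TForm.imp φ (.box ψ) ∈ L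
  mp : ∀ φ ψ : TForm, TForm.imp φ ψ ∈ L → φ ∈ L → ψ ∈ L
  subst_mem : ∀ φ ∈ L, ∀ s : ℕ → TForm, TForm.subst s φ ∈ L

def Consistent (L : Set TForm) : Prop := TForm.bot ∉ L

/-- A logic is tabular if it is the logic of some finite (nonempty) frame. -/
def Tabular (L : Set TForm) : Prop :=
  ∃ (X : Type) (_ : Finite X) (_ : Nonempty X) (R : X → X → Prop), L = FrameLog R

/-- A logic is pretabular if it is not tabular while every proper consistent
tense-logic extension of it is tabular. -/
def Pretabular (L : Set TForm) : Prop :=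
  ¬ Tabular L ∧
    ∀ L' : Set TForm, TenseLogic L' → L ⊆ L' → L ≠ L' → Consistent L' → Tabular L'

/-- The set of pretabular tense logics extending `L0`. -/
def PTAB (L0 : Set TForm) : Set (Set TForm) :=
  {L | TenseLogic L ∧ L0 ⊆ L ∧ Pretabular L}

/-! ## Some formulas -/

def bigConj : List TForm → TForm
  | [] => TForm.top
  | φ :: l => andf φ (bigConj l)

def bigDisj : List TForm → TForm
  | [] => TForm.bot
  | φ :: l => orf φ (bigDisj l)

/-- `Δ^k φ`. -/
def tdelta : ℕ → TForm → TForm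
  | 0, φ => φ
  | k+1, φ => orf (tdelta k φ) (orf (dia (tdelta k φ)) (TForm.bdia (tdelta k φ)))

/-- `∇^k φ = ¬Δ^k¬φ`. -/
def tnabla (k : ℕ) (φ : TForm) : TForm := neg (tdelta k (neg φ))

/-- `ψ_i = ¬p_0 ∧ ⋯ ∧ ¬p_{i-1} ∧ p_i`. -/
def tpsi (i : ℕ) : TForm :=
  bigConj (((List.range i).map fun j => neg (var j)) ++ [var i])

/-- `tab^T_n = ¬(Δ^n ψ_0 ∧ ⋯ ∧ Δ^n ψ_n)`. -/
def tabT (n : ℕ) : TForm :=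
  neg (bigConj ((List.range (n+1)).map fun i => tdelta n (tpsi i)))

/-! ## General frames -/

structure IsGeneralFrame {X : Type*} (R : X → X → Prop) (A : Set (Set X)) : Prop where
  empty_mem : ∅ ∈ A
  inter_mem : ∀ U ∈ A, ∀ V ∈ A, U ∩ V ∈ A
  compl_mem : ∀ U ∈ A, Uᶜ ∈ A
  fimg_mem : ∀ U ∈ A, Rimg R U ∈ A
  bimg_mem : ∀ U ∈ A, Rimg (flip R) U ∈ A

def Differentiated {X : Type*} (A : Set (Set X)) : Prop :=
  ∀ x y : X, x ≠ y → ∃ U ∈ A, x ∈ U ∧ y ∉ U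

def Tight {X : Type*} (R : X → X → Prop) (A : Set (Set X)) : Prop :=
  ∀ x y : X, ¬ R x y →
    ∃ U ∈ A, ∃ V ∈ A, (x ∈ U ∧ x ∉ Rimg (flip R) V) ∧ (y ∈ V ∧ y ∉ Rimg R U)

/-- Validity in a general frame: truth at all points under all valuations into `A`. -/
def GValid {X : Type*} (R : X → X → Prop) (A : Set (Set X)) (φ : TForm) : Prop :=
  ∀ V : ℕ → Set X, (∀ n, V n ∈ A) → ∀ x, x ∈ TSat R V φ

/-- Validity at a point of a general frame. -/
def GValidAt {X : Type*} (R : X → X → Prop) (A : Set (Set X)) (x : X) (φ : TForm) : Prop :=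
  ∀ V : ℕ → Set X, (∀ n, V n ∈ A) → x ∈ TSat R V φ

/-! ## (Local) t-morphisms -/

/-- Domain of a partial function. -/
def pdom {X Y : Type*} (f : X → Option Y) : Set X := {x | (f x).isSome}

/-- Image of a set under a partial function. -/
def pimg {X Y : Type*} (f : X → Option Y) (S : Set X) : Set Y := {y | ∃ x ∈ S, f x = some y}

/-- Range of a partial function. -/
def pran {X Y : Type*} (f : X → Option Y) : Set Y := {y | ∃ x, f x = some y}

/-- `f` is a `k`-t-morphism from `((X,R),x)` to `((Y,S),y)`. -/
def IsKTMorphism {X Y : Type*} (R : X → X → Prop) (S : Y → Y → Prop)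
    (f : X → Option Y) (x : X) (y : Y) (k : ℕ) : Prop :=
  rsharp R k x ⊆ pdom f ∧ f x = some y ∧
    ∀ z ∈ rsharp R (k-1) x, ∀ z' : Y, f z = some z' →
      pimg f (rsucc R z) = rsucc S z' ∧ pimg f (rpred R z) = rpred S z'

/-- A (total) t-morphism between frames. -/
def IsTMorphism {X Y : Type*} (R : X → X → Prop) (S : Y → Y → Prop) (f : X → Y) : Prop :=
  ∀ x : X, f '' rsucc R x = rsucc S (f x) ∧ f '' rpred R x = rpred S (f x)

/-! ## Generalized Jankov formulas -/

def finPairs (n : ℕ) : List (Fin n × Fin n) :=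
  (List.finRange n).flatMap fun i => (List.finRange n).map fun j => (i, j)

open Classical in
/-- The generalized Jankov formula `𝒥^k(𝔊,y)`, relative to an enumeration
`e : Fin n → Y` of `S_♯^k[y]` with `e 0 = y`. -/
noncomputable def jankov {Y : Type*} (S : Y → Y → Prop) (k n : ℕ) (e : Fin n → Y) : TForm :=
  andf (andf (TForm.var 0) (tnabla k (bigDisj ((List.finRange n).map fun i => TForm.var i.val))))
    (andf
      (bigConj (((finPairs n).filter fun p => decide (p.1 ≠ p.2)).map fun p =>
        tnabla k (TForm.imp (.var p.1.val) (neg (.var p.2.val)))))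
      (andf
        (bigConj (((finPairs n).filter fun p => decide (S (e p.1) (e p.2))).map fun p =>
          tnabla (k-1) (andf (TForm.imp (.var p.1.val) (dia (.var p.2.val)))
            (TForm.imp (.var p.2.val) (.bdia (.var p.1.val))))))
        (bigConj (((finPairs n).filter fun p => decide (¬ S (e p.1) (e p.2))).map fun p =>
          tnabla (k-1) (andf (TForm.imp (.var p.1.val) (neg (dia (.var p.2.val))))
            (TForm.imp (.var p.2.val) (neg (.bdia (.var p.1.val)))))))))

/-! ## Bounded-parameter formulas -/

/-- `bz_n = Δ^{n+1}p → Δ^n p`. -/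
def bz (n : ℕ) : TForm := TForm.imp (tdelta (n+1) (var 0)) (tdelta n (var 0))

def offDiag (n : ℕ) : List (Fin n × Fin n) :=
  (finPairs n).filter fun p => decide (p.1 ≠ p.2)

/-- `bw^+_n`. -/
def bwp (n : ℕ) : TForm :=
  TForm.imp (bigConj ((List.finRange (n+1)).map fun i => dia (var i.val)))
    (bigDisj ((offDiag (n+1)).map fun p =>
      dia (andf (var p.1.val) (orf (var p.2.val) (dia (var p.2.val))))))

/-- `bw^-_n`. -/
def bwm (n : ℕ) : TForm :=
  TForm.imp (bigConj ((List.finRange (n+1)).map fun i => TForm.bdia (var i.val)))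
    (bigDisj ((offDiag (n+1)).map fun p =>
      TForm.bdia (andf (var p.1.val) (orf (var p.2.val) (TForm.bdia (var p.2.val))))))

/-- `bd_n` (with `bd_0 := ⊤`, unused). -/
def bd : ℕ → TForm
  | 0 => TForm.top
  | 1 => TForm.imp (dia (box (var 0))) (var 0)
  | k+2 => TForm.imp (dia (andf (box (var (k+1))) (neg (bd (k+1))))) (var (k+1))

/-- Every strict chain inside `R[x]` has length at most `n` (`dep(x) ≤ n`). -/
def depLe {X : Type*} (R : X → X → Prop) (x : X) (n : ℕ) : Prop :=
  ∀ (m : ℕ) (c : Fin m → X), (∀ i, R x (c i)) →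
    (∀ i j : Fin m, i < j → R (c i) (c j) ∧ ¬ R (c j) (c i)) → m ≤ n

/-- Every antichain inside `R[x]` has size at most `n` (`wid^+(x) ≤ n`). -/
def widPlusLe {X : Type*} (R : X → X → Prop) (x : X) (n : ℕ) : Prop :=
  ∀ (m : ℕ) (c : Fin m → X), Function.Injective c → (∀ i, R x (c i)) →
    (∀ i j : Fin m, i ≠ j → ¬ R (c i) (c j)) → m ≤ n

/-- `wid^-(x) ≤ n`. -/
def widMinusLe {X : Type*} (R : X → X → Prop) (x : X) (n : ℕ) : Prop :=
  widPlusLe (flip R) x n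

/-- `zdg(x) ≤ n`. -/
def zdgLe {X : Type*} (R : X → X → Prop) (x : X) (n : ℕ) : Prop :=
  rsharp R n x = rsharpOmega R x

/-! ## Axiomatically presented logics -/

/-- The least tense logic containing `Γ` (i.e. `K_t ⊕ Γ`). -/
def TLogicGen (Γ : Set TForm) : Set TForm := ⋂₀ {L : Set TForm | TenseLogic L ∧ Γ ⊆ L}

def axT : TForm := TForm.imp (box (var 0)) (var 0)

def ax4 : TForm := TForm.imp (box (var 0)) (box (box (var 0)))

/-- `S4_t`. -/
def S4t : Set TForm := TLogicGen {axT, ax4}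

/-- `S4BP^{k,l}_{n,m}` with all parameters finite. -/
def S4BPfin (k l n m : ℕ) : Set TForm := TLogicGen {axT, ax4, bd k, bz l, bwp n, bwm m}

/-- `S4BP^{k,ω}_{n,m}` (no bound on z-degree: `bz_ω = ⊤`). -/
def S4BPko (k n m : ℕ) : Set TForm := TLogicGen {axT, ax4, bd k, bwp n, bwm m}

/-- `S4.3_t = S4BP^{ω,1}_{1,1}`. -/
def S43t : Set TForm := TLogicGen {axT, ax4, bz 1, bwp 1, bwm 1}

/-- `S4BP^{2,ω}_{2,2}`. -/
def S4BP2w22 : Set TForm := TLogicGen {axT, ax4, bd 2, bwp 2, bwm 2}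

/-- `S4BP^{2,ω}_{2,3}`. -/
def S4BP2w23 : Set TForm := TLogicGen {axT, ax4, bd 2, bwp 2, bwm 3}

/-- `S5_t = S4_t ⊕ (◇p → □◇p)`. -/
def S5t : Set TForm := TLogicGen {axT, ax4, TForm.imp (dia (var 0)) (box (dia (var 0)))}

/-- Kripke completeness: `L` is the logic of the class of Kripke frames validating `L`. -/
def KripkeComplete (L : Set TForm) : Prop :=
  L = {φ | ∀ (X : Type) (R : X → X → Prop), Nonempty X → (∀ ψ ∈ L, Valid R ψ) → Valid R φ}

/-- The finite model property: `L` is the logic of the class of finite frames validating `L`. -/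
def HasFMP (L : Set TForm) : Prop :=
  L = {φ | ∀ (X : Type) (R : X → X → Prop), Finite X → Nonempty X →
        (∀ ψ ∈ L, Valid R ψ) → Valid R φ}

/-! ## Skeletons and pre-skeletons -/

/-- A skeleton: a preorder frame all of whose clusters are singletons. -/
def IsSkeleton {X : Type*} (R : X → X → Prop) : Prop :=
  Reflexive R ∧ Transitive R ∧ ∀ y z : X, R y z → R z y → y = z

/-- Membership in the blown-up cluster `C^x_λ = {x} ∪ N`. -/
def inCl {X N : Type*} (x : X) : X ⊕ N → Prop
  | .inl u => u = x
  | .inr _ => True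

/-- The relation of the pre-skeleton `𝔉^x_λ`, where the fresh points are indexed by `N`:
`R ∪ (C^x_λ × R[x]) ∪ (R̆[x] × C^x_λ) ∪ (C^x_λ × C^x_λ)`. -/
def preRel {X : Type*} (N : Type*) (R : X → X → Prop) (x : X) : X ⊕ N → X ⊕ N → Prop :=
  fun a b =>
    (∃ u v, a = Sum.inl u ∧ b = Sum.inl v ∧ R u v) ∨
    (inCl x a ∧ ∃ v, b = Sum.inl v ∧ R x v) ∨
    (inCl x b ∧ ∃ u, a = Sum.inl u ∧ R u x) ∨
    (inCl x a ∧ inCl x b)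

/-- c-irreducibility of the pre-skeleton `𝔉^x_1`: every t-morphic image of `𝔉^x_1` is
isomorphic to `𝔉^x_1` or is a t-morphic image of `𝔉`. -/
def CIrrOne {X : Type} (R : X → X → Prop) (x : X) : Prop :=
  ∀ (Y : Type) (S : Y → Y → Prop),
    (∃ f : X ⊕ Fin 1 → Y, Function.Surjective f ∧ IsTMorphism (preRel (Fin 1) R x) S f) →
    ((∃ g : X ⊕ Fin 1 → Y, Function.Bijective g ∧ IsTMorphism (preRel (Fin 1) R x) S g) ∨
     (∃ h : X → Y, Function.Surjective h ∧ IsTMorphism R S h))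

/-- c-irreducibility of the pre-skeleton `𝔉^x_ω`: every t-morphic image of `𝔉^x_ω` is
isomorphic to `𝔉^x_m` for some `0 < m ≤ ω` or is a t-morphic image of `𝔉`. -/
def CIrrOmega {X : Type} (R : X → X → Prop) (x : X) : Prop :=
  ∀ (Y : Type) (S : Y → Y → Prop),
    (∃ f : X ⊕ ℕ → Y, Function.Surjective f ∧ IsTMorphism (preRel ℕ R x) S f) →
    ((∃ m : ℕ, 0 < m ∧ ∃ g : X ⊕ Fin m → Y, Function.Bijective g ∧
        IsTMorphism (preRel (Fin m) R x) S g) ∨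
     (∃ g : X ⊕ ℕ → Y, Function.Bijective g ∧ IsTMorphism (preRel ℕ R x) S g) ∨
     (∃ h : X → Y, Function.Surjective h ∧ IsTMorphism R S h))

/-! ## Chains, garlands -/

/-- The chain `𝔠_n = ({0,…,n-1}, ≥)`. -/
def chainR (n : ℕ) : Fin n → Fin n → Prop := fun i j => j ≤ i

/-- `L^↑ = ⋂_{n ≥ 1} Log(𝔠_n)`, the tense logic of all finite chains. -/
def Lup : Set TForm := ⋂ n : ℕ, FrameLog (chainR (n+1))

def Lcirc : Set TForm := FrameLog (preRel ℕ (chainR 1) (0 : Fin 1))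

def Lplus : Set TForm := FrameLog (preRel ℕ (chainR 2) (1 : Fin 2))

def Lminus : Set TForm := FrameLog (preRel ℕ (chainR 2) (0 : Fin 2))

def Lpm : Set TForm := FrameLog (preRel ℕ (chainR 3) (1 : Fin 3))

/-- The frame `𝔊_ℤ`. -/
def Rz : ℤ → ℤ → Prop := fun i j => i = j ∨ (Odd i ∧ (j = i - 1 ∨ j = i + 1))

/-- `Ga = Log(𝔊_ℤ)`. -/
def Ga : Set TForm := FrameLog Rz

/-- The garland `𝔊_n` on `{0,…,n}`. -/
def garR (n : ℕ) : Fin (n+1) → Fin (n+1) → Prop :=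
  fun i j => i = j ∨ (Odd (i : ℕ) ∧ ((j : ℕ) + 1 = (i : ℕ) ∨ (j : ℕ) = (i : ℕ) + 1))

/-! ## Generalized Thue–Morse sequences -/

/-- Endpoints `(lo, hi)` of the domain of the stage-`k` approximation `χ^f_k`. -/
def tmBnd : ℕ → ℤ × ℤ
  | 0 => (0, 2)
  | k+1 =>
      let ab := tmBnd k
      if k % 2 = 0 then (ab.1, ab.2 + (ab.2 - ab.1 + 1) + 1)
      else (ab.1 - (ab.2 - ab.1 + 1) - 1, ab.2)

/-- Value of the stage-`k` approximation `χ^f_k` (junk outside its domain). -/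
def tmVal (f : ℕ → Bool) : ℕ → ℤ → Bool
  | 0, j => decide (j = 2)
  | k+1, j =>
      let a := (tmBnd k).1
      let b := (tmBnd k).2
      if k % 2 = 0 then
        if j ≤ b then tmVal f k j
        else if j = b + 1 then f k
        else ! tmVal f k (j - (b + 2) + a)
      else
        if a ≤ j then tmVal f k j
        else if j = a - 1 then f k
        else ! tmVal f k (j + (b - a + 1) + 1)

/-- The generalized Thue–Morse sequence `χ^f : ℤ → Bool` generated by `f`
(evaluated at a stage whose domain certainly contains the argument). -/
def chi (f : ℕ → Bool) : ℤ → Bool := fun j => tmVal f (2 * j.natAbs + 2) j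

/-- `α` is finitely perfect: for every finite subsequence `β = α↾[c,d]` there is `n ∈ ω`
such that `β` embeds into every finite subsequence `ζ = α↾[c',d']` with `|dom ζ| > n`. -/
def FinitelyPerfect (α : ℤ → Bool) : Prop :=
  ∀ c d : ℤ, ∃ n : ℕ, ∀ c' d' : ℤ, (n : ℤ) < d' - c' + 1 →
    ∃ s : ℤ, c' ≤ c + s ∧ d + s ≤ d' ∧ ∀ j : ℤ, c ≤ j → j ≤ d → α j = α (j + s)

/-- `dep(L) = ℵ0`: for every `n` there is a refined general frame validating `L`
containing a strict chain of length `n` inside some `R[x]`. -/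
def DepInfinite (L : Set TForm) : Prop :=
  ∀ n : ℕ, ∃ (X : Type) (R : X → X → Prop) (A : Set (Set X)),
    Nonempty X ∧ IsGeneralFrame R A ∧ Differentiated A ∧ Tight R A ∧
    (∀ φ ∈ L, GValid R A φ) ∧
    ∃ (x : X) (c : Fin n → X), (∀ i, R x (c i)) ∧
      ∀ i j : Fin n, i < j → R (c i) (c j) ∧ ¬ R (c j) (c i)


/-!
If `L ⊆ L^↑`, every chain `𝔠_{n+1}`, with all its subsets admissible, is a refined frame for `L`
containing a strict chain of length `n`.

Conversely, let a refined frame for `L` contain a strict chain `c 0 < ⋯ < c n`. The axioms `T`, `4`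
and `bz₁` make `R` a preorder in which comparability is transitive, so the points comparable with
`c 0` form a generated subframe that is totally preordered. Tightness yields admissible down-sets
`D i ⊇ ↓(c i)` missing `↑(c (i + 1))`. Sending a point to the first `i` with `w ∈ D i` is then a
t-morphism of that subframe onto `𝔠_{n+1}` whose fibres are admissible, so every formula valid in
the general frame is valid in `𝔠_{n+1}`.
-/

open TForm Relation

section Semantics

variable {X : Type*} {R : X → X → Prop} {V : ℕ → Set X} {x : X} {φ ψ : TForm}

@[simp] lemma mem_TSat_imp : x ∈ TSat R V (.imp φ ψ) ↔ (x ∈ TSat R V φ → x ∈ TSat R V ψ) := by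
  simp [TSat, imp_iff_not_or]

@[simp] lemma mem_TSat_neg : x ∈ TSat R V (neg φ) ↔ x ∉ TSat R V φ := by
  simp [TForm.neg, TSat]

@[simp] lemma mem_TSat_orf : x ∈ TSat R V (orf φ ψ) ↔ x ∈ TSat R V φ ∨ x ∈ TSat R V ψ := by
  simp [TForm.orf, or_iff_not_imp_left]

@[simp] lemma mem_TSat_box : x ∈ TSat R V (.box φ) ↔ ∀ y, R x y → y ∈ TSat R V φ := Iff.rfl

@[simp] lemma mem_TSat_bdia : x ∈ TSat R V (.bdia φ) ↔ ∃ y, R y x ∧ y ∈ TSat R V φ := Iff.rfl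

@[simp] lemma mem_TSat_dia : x ∈ TSat R V (dia φ) ↔ ∃ y, R x y ∧ y ∈ TSat R V φ := by
  simp [TForm.dia]

lemma mem_TSat_tdelta_succ (hrefl : ∀ w, R w w) {k : ℕ} :
    x ∈ TSat R V (tdelta (k + 1) φ) ↔ ∃ y, SymmGen R x y ∧ y ∈ TSat R V (tdelta k φ) := by
  simp only [tdelta, mem_TSat_orf, mem_TSat_dia, mem_TSat_bdia, SymmGen]
  constructor
  · rintro (h | ⟨y, hxy, hy⟩ | ⟨y, hyx, hy⟩)
    exacts [⟨x, .inl (hrefl x), h⟩, ⟨y, .inl hxy, hy⟩, ⟨y, .inr hyx, hy⟩]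
  · rintro ⟨y, hxy | hyx, hy⟩
    exacts [.inr (.inl ⟨y, hxy, hy⟩), .inr (.inr ⟨y, hyx, hy⟩)]

end Semantics

lemma subset_TLogicGen (Γ : Set TForm) : Γ ⊆ TLogicGen Γ :=
  fun _ hφ _ hL => hL.2 hφ

section GeneralFrame

variable {X : Type*} {R : X → X → Prop} {A : Set (Set X)}

lemma IsGeneralFrame.union_mem (hA : IsGeneralFrame R A) {U V : Set X} (hU : U ∈ A)
    (hV : V ∈ A) : U ∪ V ∈ A := by
  simpa [Set.compl_inter] using hA.compl_mem _ (hA.inter_mem _ (hA.compl_mem U hU) _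
    (hA.compl_mem V hV))

lemma IsGeneralFrame.biUnion_mem (hA : IsGeneralFrame R A) {ι : Type*} (s : Finset ι)
    {C : ι → Set X} (hC : ∀ i ∈ s, C i ∈ A) : ⋃ i ∈ s, C i ∈ A := by
  classical
  induction s using Finset.induction_on with
  | empty => simpa using hA.empty_mem
  | insert a s _ ih =>
    rw [Finset.set_biUnion_insert]
    exact hA.union_mem (hC a (by simp)) (ih fun i hi => hC i (by simp [hi]))

lemma IsGeneralFrame.preimage_mem {Z : Type*} [Finite Z] (hA : IsGeneralFrame R A) {f : X → Z}
    (hf : ∀ z, f ⁻¹' {z} ∈ A) (W : Set Z) : f ⁻¹' W ∈ A := by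
  have hW : f ⁻¹' W = ⋃ z ∈ W.toFinite.toFinset, f ⁻¹' {z} := by ext; simp
  exact hW ▸ hA.biUnion_mem _ fun z _ => hf z

lemma isGeneralFrame_univ : IsGeneralFrame R Set.univ :=
  ⟨trivial, fun _ _ _ _ => trivial, fun _ _ => trivial, fun _ _ => trivial, fun _ _ => trivial⟩

lemma differentiated_univ : Differentiated (Set.univ : Set (Set X)) :=
  fun x _ hxy => ⟨{x}, trivial, rfl, Ne.symm hxy⟩

lemma tight_univ : Tight R Set.univ := by
  intro x y hxy
  refine ⟨{x}, trivial, {y}, trivial, ⟨rfl, ?_⟩, rfl, ?_⟩ <;>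
    · rintro ⟨z, rfl, hz⟩
      exact hxy hz

lemma gValid_univ_iff {φ : TForm} : GValid R Set.univ φ ↔ Valid R φ :=
  ⟨fun h V => h V fun _ => trivial, fun h V _ => h V⟩

end GeneralFrame

section Correspondence

variable {X : Type*} {R : X → X → Prop} {A : Set (Set X)}

lemma reflexive_of_gValid_axT (hA : IsGeneralFrame R A) (ht : Tight R A)
    (hT : GValid R A axT) (w : X) : R w w := by
  by_contra hww
  obtain ⟨U, hU, -, -, ⟨hwU, -⟩, -, hwRU⟩ := ht w w hww
  have := hT (fun _ => Rimg R U) (fun _ => hA.fimg_mem U hU) w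
  simp only [axT, mem_TSat_imp, mem_TSat_box] at this
  exact hwRU (this fun v hwv => ⟨w, hwU, hwv⟩)

lemma transitive_of_gValid_ax4 (hA : IsGeneralFrame R A) (ht : Tight R A)
    (h4 : GValid R A ax4) {a b c : X} (hab : R a b) (hbc : R b c) : R a c := by
  by_contra hac
  obtain ⟨U, hU, -, -, ⟨haU, -⟩, -, hcRU⟩ := ht a c hac
  have := h4 (fun _ => Rimg R U) (fun _ => hA.fimg_mem U hU) a
  simp only [ax4, mem_TSat_imp, mem_TSat_box] at this
  exact hcRU (this (fun v hav => ⟨a, haU, hav⟩) b hab c hbc)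

lemma symmGen_trans_of_gValid_bz_one (hA : IsGeneralFrame R A) (ht : Tight R A)
    (hrefl : ∀ w, R w w) (hbz : GValid R A (bz 1)) {u w v : X} (huw : SymmGen R u w)
    (hwv : SymmGen R w v) : SymmGen R u v := by
  by_contra huv
  obtain ⟨U, hU, -, -, ⟨huU, -⟩, -, hvRU⟩ := ht u v fun h => huv (.of_rel h)
  obtain ⟨-, -, V, hV, ⟨-, hvRV⟩, huV, -⟩ := ht v u fun h => huv (.of_rel_symm h)
  set val : ℕ → Set X := fun _ => U ∩ V
  have hw : w ∈ TSat R val (tdelta 1 (var 0)) :=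
    (mem_TSat_tdelta_succ hrefl).2 ⟨u, huw.symm, huU, huV⟩
  have hv := hbz val (fun _ => hA.inter_mem U hU V hV) v
  simp only [bz, mem_TSat_imp] at hv
  obtain ⟨y, hvy | hyv, hyU, hyV⟩ :=
    (mem_TSat_tdelta_succ hrefl).1 (hv ((mem_TSat_tdelta_succ hrefl).2 ⟨w, hwv.symm, hw⟩))
  exacts [hvRV ⟨y, hyV, hvy⟩, hvRU ⟨y, hyU, hyv⟩]

lemma exists_downset_separating (hA : IsGeneralFrame R A) (ht : Tight R A)
    (htrans : ∀ {a b c}, R a b → R b c → R a c) {x y : X} (hyx : ¬R y x) :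
    ∃ T ∈ A, (∀ u w, R u w → w ∈ T → u ∈ T) ∧ (∀ w, R w x → w ∈ T) ∧ ∀ w ∈ T, ¬R y w := by
  obtain ⟨-, -, V, hV, ⟨-, hyRV⟩, hxV, -⟩ := ht y x hyx
  refine ⟨Rimg (flip R) V, hA.bimg_mem V hV, ?_, fun w hwx => ⟨x, hxV, hwx⟩, ?_⟩
  · rintro u w huw ⟨z, hzV, hwz⟩
    exact ⟨z, hzV, htrans huw hwz⟩
  · rintro w ⟨z, hzV, hwz⟩ hyw
    exact hyRV ⟨z, hzV, htrans hyw hwz⟩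

end Correspondence

section Transfer

structure IsTMorphismOn {X Z : Type*} (R : X → X → Prop) (S : Z → Z → Prop) (Y : Set X)
    (f : X → Z) : Prop where
  succ_mem : ∀ w ∈ Y, ∀ v, R w v → v ∈ Y
  pred_mem : ∀ w ∈ Y, ∀ v, R v w → v ∈ Y
  map_rel : ∀ w ∈ Y, ∀ v, R w v → S (f w) (f v)
  exists_succ : ∀ w ∈ Y, ∀ z, S (f w) z → ∃ v, R w v ∧ f v = z
  exists_pred : ∀ w ∈ Y, ∀ z, S z (f w) → ∃ v, R v w ∧ f v = z

variable {X Z : Type*} {R : X → X → Prop} {S : Z → Z → Prop} {Y : Set X} {f : X → Z}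

lemma IsTMorphismOn.mem_TSat_iff (hf : IsTMorphismOn R S Y f) {V : ℕ → Set X}
    {W : ℕ → Set Z} (hVW : ∀ k, ∀ w ∈ Y, w ∈ V k ↔ f w ∈ W k) (φ : TForm) :
    ∀ w ∈ Y, w ∈ TSat R V φ ↔ f w ∈ TSat S W φ := by
  induction φ with
  | var k => exact hVW k
  | bot => simp [TSat]
  | imp φ ψ ihφ ihψ => intro w hw; simp only [mem_TSat_imp, ihφ w hw, ihψ w hw]
  | box φ ih =>
    intro w hw
    simp only [mem_TSat_box]
    constructor
    · intro h z hz
      obtain ⟨v, hwv, rfl⟩ := hf.exists_succ w hw z hz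
      exact (ih v (hf.succ_mem w hw v hwv)).1 (h v hwv)
    · intro h v hwv
      exact (ih v (hf.succ_mem w hw v hwv)).2 (h _ (hf.map_rel w hw v hwv))
  | bdia φ ih =>
    intro w hw
    simp only [mem_TSat_bdia]
    constructor
    · rintro ⟨v, hvw, hv⟩
      have hvY := hf.pred_mem w hw v hvw
      exact ⟨f v, hf.map_rel v hvY w hvw, (ih v hvY).1 hv⟩
    · rintro ⟨z, hz, hzφ⟩
      obtain ⟨v, hvw, rfl⟩ := hf.exists_pred w hw z hz
      exact ⟨v, hvw, (ih v (hf.pred_mem w hw v hvw)).2 hzφ⟩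

lemma IsTMorphismOn.valid_of_gValid {A : Set (Set X)} (hf : IsTMorphismOn R S Y f)
    (hsurj : ∀ z, ∃ w ∈ Y, f w = z) (hdef : ∀ W : Set Z, f ⁻¹' W ∈ A) {φ : TForm}
    (hφ : GValid R A φ) : Valid S φ := by
  intro W z
  obtain ⟨w, hw, rfl⟩ := hsurj z
  exact (hf.mem_TSat_iff (fun _ _ _ => Iff.rfl) φ w hw).1 (hφ _ (fun k => hdef (W k)) w)

end Transfer

section Cuts

variable {X : Type*} {R : X → X → Prop} {D : ℕ → Set X} {n : ℕ} {c : ℕ → X}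

/-- Junk value `sInf ∅ = 0` when `w` lies in no `D i`. -/
noncomputable def cutLevel (D : ℕ → Set X) (w : X) : ℕ := sInf {i | w ∈ D i}

/-- The point `c j` of the chain is sent to `n - j`, since `𝔠_{n+1}` is ordered by `≥`. -/
noncomputable def chainProj (n : ℕ) (D : ℕ → Set X) (w : X) : Fin (n + 1) :=
  ⟨n - cutLevel D w, by omega⟩

structure IsChainCuts (R : X → X → Prop) (c : ℕ → X) (n : ℕ) (D : ℕ → Set X) : Prop where
  down_closed : ∀ i u w, R u w → w ∈ D i → u ∈ D i
  mem_of_rel : ∀ i w, R w (c i) → w ∈ D i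
  not_rel_of_mem : ∀ i < n, ∀ w ∈ D i, ¬R (c (i + 1)) w
  mem_top : ∀ w, w ∈ D n

lemma cutLevel_preimage_singleton (hD : ∀ w, ∃ i, w ∈ D i) (j : ℕ) :
    cutLevel D ⁻¹' {j} = D j \ ⋃ i ∈ Finset.range j, D i := by
  ext w
  simp only [Set.mem_preimage, Set.mem_singleton_iff, Set.mem_sdiff, Set.mem_iUnion,
    Finset.mem_range, not_exists]
  constructor
  · rintro rfl
    exact ⟨Nat.sInf_mem (hD w), fun i hi => Nat.notMem_of_lt_sInf hi⟩
  · rintro ⟨hj, hlt⟩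
    refine le_antisymm (Nat.sInf_le hj) (not_lt.1 fun h => hlt _ h ?_)
    exact Nat.sInf_mem (s := {i | w ∈ D i}) ⟨j, hj⟩

namespace IsChainCuts

variable (hD : IsChainCuts R c n D)
include hD

lemma mem_cutLevel (w : X) : w ∈ D (cutLevel D w) :=
  Nat.sInf_mem (s := {i | w ∈ D i}) ⟨n, hD.mem_top w⟩

lemma cutLevel_le (w : X) : cutLevel D w ≤ n := Nat.sInf_le (hD.mem_top w)

lemma cutLevel_le_of_rel {u w : X} (h : R u w) : cutLevel D u ≤ cutLevel D w :=
  Nat.sInf_le (hD.down_closed _ u w h (hD.mem_cutLevel w))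

lemma cutLevel_chain (hrefl : ∀ w, R w w) (hc : ∀ i j, i ≤ j → j ≤ n → R (c i) (c j))
    {j : ℕ} (hj : j ≤ n) : cutLevel D (c j) = j := by
  refine le_antisymm (Nat.sInf_le (hD.mem_of_rel j _ (hrefl _))) (not_lt.1 fun hlt => ?_)
  exact hD.not_rel_of_mem _ (by omega) _
    (hD.down_closed _ _ _ (hc _ _ hlt hj) (hD.mem_cutLevel _)) (hrefl _)

lemma rel_chain_of_cutLevel_lt (htrans : ∀ {a b c}, R a b → R b c → R a c)
    (hc : ∀ i j, i ≤ j → j ≤ n → R (c i) (c j)) {w : X} (hw : ∀ i ≤ n, SymmGen R w (c i))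
    {j : ℕ} (hlt : cutLevel D w < j) (hj : j ≤ n) : R w (c j) := by
  have hnext : R w (c (cutLevel D w + 1)) :=
    (hw _ (by omega)).resolve_right (hD.not_rel_of_mem _ (by omega) w (hD.mem_cutLevel w))
  exact htrans hnext (hc _ _ hlt hj)

lemma chain_rel_of_lt_cutLevel {w : X} (hw : ∀ i ≤ n, SymmGen R w (c i)) {j : ℕ}
    (hlt : j < cutLevel D w) : R (c j) w :=
  (hw j (by have := hD.cutLevel_le w; omega)).resolve_left
    fun h => Nat.notMem_of_lt_sInf hlt (hD.mem_of_rel j w h)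

lemma chainProj_chain (hrefl : ∀ w, R w w) (hc : ∀ i j, i ≤ j → j ≤ n → R (c i) (c j))
    {j : ℕ} (hj : j ≤ n) : (chainProj n D (c j) : ℕ) = n - j := by
  simp [chainProj, hD.cutLevel_chain hrefl hc hj]

lemma isTMorphismOn (hrefl : ∀ w, R w w) (htrans : ∀ {a b c}, R a b → R b c → R a c)
    (hcomp : ∀ {u w v}, SymmGen R u w → SymmGen R w v → SymmGen R u v)
    (hc : ∀ i j, i ≤ j → j ≤ n → R (c i) (c j)) :
    IsTMorphismOn R (chainR (n + 1)) {w | SymmGen R (c 0) w} (chainProj n D) := by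
  have hY : ∀ w, SymmGen R (c 0) w → ∀ i ≤ n, SymmGen R w (c i) := fun w hw i hi =>
    hcomp hw.symm (.of_rel (hc 0 i (Nat.zero_le i) hi))
  refine ⟨fun w hw v hwv => hcomp hw (.of_rel hwv), fun w hw v hvw => hcomp hw (.of_rel_symm hvw),
    fun w _ v hwv => ?_, fun w hw z hz => ?_, fun w hw z hz => ?_⟩
  · have := hD.cutLevel_le_of_rel hwv
    simp only [chainR, chainProj, Fin.mk_le_mk]
    omega
  · simp only [chainR, chainProj, Fin.le_def] at hz
    have := hD.cutLevel_le w
    rcases (show cutLevel D w = n - z ∨ cutLevel D w < n - z by omega) with heq | hlt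
    · exact ⟨w, hrefl w, Fin.ext (by simp [chainProj]; omega)⟩
    · refine ⟨c (n - z), hD.rel_chain_of_cutLevel_lt htrans hc (hY w hw) hlt (by omega), ?_⟩
      exact Fin.ext (by rw [hD.chainProj_chain hrefl hc (by omega)]; omega)
  · simp only [chainR, chainProj, Fin.le_def] at hz
    have := hD.cutLevel_le w
    rcases (show n - z = cutLevel D w ∨ n - z < cutLevel D w by omega) with heq | hlt
    · exact ⟨w, hrefl w, Fin.ext (by simp [chainProj]; omega)⟩
    · refine ⟨c (n - z), hD.chain_rel_of_lt_cutLevel (hY w hw) hlt, ?_⟩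
      exact Fin.ext (by rw [hD.chainProj_chain hrefl hc (by omega)]; omega)

lemma preimage_chainProj_mem {A : Set (Set X)} (hA : IsGeneralFrame R A) (hDA : ∀ i, D i ∈ A)
    (W : Set (Fin (n + 1))) : chainProj n D ⁻¹' W ∈ A := by
  refine hA.preimage_mem (fun z => ?_) W
  have hfib : chainProj n D ⁻¹' {z} = cutLevel D ⁻¹' {n - z} := by
    ext w
    have := hD.cutLevel_le w
    simp only [Set.mem_preimage, Set.mem_singleton_iff, chainProj, Fin.ext_iff]
    omega
  rw [hfib, cutLevel_preimage_singleton fun w => ⟨n, hD.mem_top w⟩, Set.sdiff_eq]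
  exact hA.inter_mem _ (hDA _) _ (hA.compl_mem _ (hA.biUnion_mem _ fun i _ => hDA i))

end IsChainCuts

lemma exists_isChainCuts {A : Set (Set X)} (hA : IsGeneralFrame R A) (ht : Tight R A)
    (htrans : ∀ {a b c}, R a b → R b c → R a c) (hc : ∀ i < n, ¬R (c (i + 1)) (c i)) :
    ∃ D : ℕ → Set X, (∀ i, D i ∈ A) ∧ IsChainCuts R c n D := by
  choose! T hTA hT using fun i (hi : i < n) => exists_downset_separating hA ht htrans (hc i hi)
  classical
  refine ⟨fun i => if i < n then T i else Set.univ, fun i => ?_, ⟨fun i u w huw => ?_,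
    fun i w hw => ?_, fun i hi w => ?_, fun w => by simp⟩⟩
  · dsimp only
    split_ifs with hi
    exacts [hTA i hi, by simpa using hA.compl_mem _ hA.empty_mem]
  · split_ifs with hi
    exacts [(hT i hi).1 u w huw, id]
  · split_ifs with hi
    exacts [(hT i hi).2.1 w hw, trivial]
  · simpa [hi] using (hT i hi).2.2 w

end Cuts

lemma valid_chainR_of_gValid {X : Type*} {R : X → X → Prop} {A : Set (Set X)}
    (hA : IsGeneralFrame R A) (ht : Tight R A) (hT : GValid R A axT) (h4 : GValid R A ax4)
    (hbz : GValid R A (bz 1)) {n : ℕ} (c : Fin (n + 1) → X)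
    (hc : ∀ i j : Fin (n + 1), i < j → R (c i) (c j) ∧ ¬R (c j) (c i)) {φ : TForm}
    (hφ : GValid R A φ) : Valid (chainR (n + 1)) φ := by
  have hrefl := reflexive_of_gValid_axT hA ht hT
  have htrans {a b c} := @transitive_of_gValid_ax4 _ _ _ hA ht h4 a b c
  have hcomp {u w v} := @symmGen_trans_of_gValid_bz_one _ _ _ hA ht hrefl hbz u w v
  set d : ℕ → X := fun i => c ⟨min i n, by omega⟩
  have hd_lt {i j : ℕ} (hij : i < j) (hj : j ≤ n) : R (d i) (d j) ∧ ¬R (d j) (d i) :=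
    hc _ _ (Fin.mk_lt_mk.2 (by omega))
  have hd (i j : ℕ) (hij : i ≤ j) (hj : j ≤ n) : R (d i) (d j) := by
    rcases hij.lt_or_eq with hij | rfl
    exacts [(hd_lt hij hj).1, hrefl _]
  obtain ⟨D, hDA, hD⟩ :=
    exists_isChainCuts hA ht htrans fun i hi => (hd_lt (i := i) (j := i + 1) (by omega) hi).2
  refine (hD.isTMorphismOn hrefl htrans hcomp hd).valid_of_gValid (fun z => ?_)
    (hD.preimage_chainProj_mem hA hDA) hφ
  refine ⟨d (n - z), .of_rel (hd 0 (n - z) (Nat.zero_le _) (by omega)), Fin.ext ?_⟩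
  rw [hD.chainProj_chain hrefl hd (by omega)]
  omega

lemma exists_strictChain_chainR (n : ℕ) : ∃ (x : Fin (n + 1)) (c : Fin n → Fin (n + 1)),
    (∀ i, chainR (n + 1) x (c i)) ∧
      ∀ i j : Fin n, i < j → chainR (n + 1) (c i) (c j) ∧ ¬chainR (n + 1) (c j) (c i) := by
  refine ⟨Fin.last n, fun i => (Fin.rev i).castSucc, fun i => Fin.le_last _, fun i j hij => ?_⟩
  simp only [chainR, Fin.castSucc_le_castSucc_iff, Fin.rev_le_rev, not_le]
  exact ⟨hij.le, hij⟩

theorem statement12_general (L : Set TForm) (hext : S43t ⊆ L) :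
    L ⊆ Lup ↔ DepInfinite L := by
  constructor
  · intro hsub n
    obtain ⟨x, c, hx, hc⟩ := exists_strictChain_chainR n
    exact ⟨Fin (n + 1), chainR (n + 1), Set.univ, inferInstance, isGeneralFrame_univ,
      differentiated_univ, tight_univ,
      fun φ hφ => gValid_univ_iff.2 (Set.mem_iInter.1 (hsub hφ) n), x, c, hx, hc⟩
  · intro hdep φ hφ
    refine Set.mem_iInter.2 fun n => ?_
    obtain ⟨X, R, A, -, hA, -, ht, hL, -, c, -, hc⟩ := hdep (n + 1)
    have hS43 (ψ : TForm) (hψ : ψ ∈ ({axT, ax4, bz 1, bwp 1, bwm 1} : Set TForm)) :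
        GValid R A ψ :=
      hL ψ (hext (subset_TLogicGen _ hψ))
    exact valid_chainR_of_gValid hA ht (hS43 _ (by simp)) (hS43 _ (by simp)) (hS43 _ (by simp))
      c hc (hL φ hφ)

/-- for a tense logic `L ⊇ S4.3_t`, `L ⊆ L^↑` iff `dep(L) = ℵ0`. -/
theorem statement12 (L : Set TForm) (hL : TenseLogic L) (hext : S43t ⊆ L) :
    L ⊆ Lup ↔ DepInfinite L :=
  statement12_general L hext
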